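/- If A is a commutative k-algebra and R ∈ A⊗A⊗A is a canonical R-matrix, then R = 1⊗1⊗1 and the unit map k → A is a ring epimorphism. -/

import Mathlib

open TensorProduct

/-!
Over a commutative algebra the centralizing conditions say that `R` times `a ⊗ 1 ⊗ 1`,
`1 ⊗ a ⊗ 1` and `1 ⊗ 1 ⊗ a` all agree; cancelling the invertible `R` makes these three tensors
equal. Then `1 ⊗ a = a ⊗ 1` in `A ⊗ A`, and every tensor `a ⊗ b ⊗ c` collapses to `abc ⊗ 1 ⊗ 1`,
so `R = m ⊗ 1 ⊗ 1` with `m = ∑ xᵢ yᵢ zᵢ`. Multiplying out the first hexagon identity gives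
`m² = m`, so `R` is an invertible idempotent, i.e. `R = 1`.
-/

namespace TensorProduct

variable {k A : Type*} [CommRing k] [CommRing A] [Algebra k A]

theorem tmul_tmul_mul_sum (a b c : A) {ι : Type*} (s : Finset ι) (x y z : ι → A) :
    (a ⊗ₜ[k] b ⊗ₜ[k] c) * ∑ i ∈ s, x i ⊗ₜ[k] y i ⊗ₜ[k] z i
      = ∑ i ∈ s, (a * x i) ⊗ₜ[k] (b * y i) ⊗ₜ[k] (c * z i) := by
  simp only [Finset.mul_sum, Algebra.TensorProduct.tmul_mul_tmul]

theorem tmul_one_eq_one_tmul_of_one_tmul_tmul_one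
    (h23 : ∀ a : A, (1 : A) ⊗ₜ[k] a ⊗ₜ[k] (1 : A) = (1 : A) ⊗ₜ[k] (1 : A) ⊗ₜ[k] a) (a : A) :
    a ⊗ₜ[k] (1 : A) = (1 : A) ⊗ₜ[k] a := by
  simpa using congrArg
    (Algebra.TensorProduct.map (Algebra.TensorProduct.lmul' k) (AlgHom.id k A)) (h23 a)

theorem tmul_tmul_eq_mul_tmul_one_tmul_one
    (h12 : ∀ a : A, a ⊗ₜ[k] (1 : A) ⊗ₜ[k] (1 : A) = (1 : A) ⊗ₜ[k] a ⊗ₜ[k] (1 : A))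
    (h23 : ∀ a : A, (1 : A) ⊗ₜ[k] a ⊗ₜ[k] (1 : A) = (1 : A) ⊗ₜ[k] (1 : A) ⊗ₜ[k] a)
    (a b c : A) :
    a ⊗ₜ[k] b ⊗ₜ[k] c = (a * b * c) ⊗ₜ[k] (1 : A) ⊗ₜ[k] (1 : A) := by
  calc a ⊗ₜ[k] b ⊗ₜ[k] c
      = (a ⊗ₜ[k] (1 : A) ⊗ₜ[k] (1 : A)) * ((1 : A) ⊗ₜ[k] b ⊗ₜ[k] (1 : A))
          * ((1 : A) ⊗ₜ[k] (1 : A) ⊗ₜ[k] c) := by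
        simp only [Algebra.TensorProduct.tmul_mul_tmul, mul_one, one_mul]
    _ = (a ⊗ₜ[k] (1 : A) ⊗ₜ[k] (1 : A)) * (b ⊗ₜ[k] (1 : A) ⊗ₜ[k] (1 : A))
          * (c ⊗ₜ[k] (1 : A) ⊗ₜ[k] (1 : A)) := by rw [h12 b, h12 c, h23 c]
    _ = (a * b * c) ⊗ₜ[k] (1 : A) ⊗ₜ[k] (1 : A) := by
        simp only [Algebra.TensorProduct.tmul_mul_tmul, mul_one]

/-- Contracting all four tensor factors of the first hexagon identity. -/
theorem isIdempotentElem_sum_mul_mul {ι : Type*} (s : Finset ι) (x y z : ι → A)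
    (hhex1 : ∑ i ∈ s, x i ⊗ₜ[k] y i ⊗ₜ[k] (1 : A) ⊗ₜ[k] z i
      = ∑ i ∈ s, ∑ j ∈ s, (x j * x i) ⊗ₜ[k] y j ⊗ₜ[k] (z j * y i) ⊗ₜ[k] z i) :
    IsIdempotentElem (∑ i ∈ s, x i * y i * z i) := by
  let μ : A ⊗[k] A →ₐ[k] A := Algebra.TensorProduct.lmul' k
  let μ4 : ((A ⊗[k] A) ⊗[k] A) ⊗[k] A →ₐ[k] A :=
    μ.comp (Algebra.TensorProduct.map
      (μ.comp (Algebra.TensorProduct.map μ (AlgHom.id k A))) (AlgHom.id k A))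
  have h := congrArg μ4 hhex1
  simp only [μ4, μ, map_sum, AlgHom.coe_comp, Function.comp_apply,
    Algebra.TensorProduct.map_tmul, AlgHom.coe_id, id_eq,
    Algebra.TensorProduct.lmul'_apply_tmul, mul_one] at h
  rw [IsIdempotentElem, Finset.sum_mul_sum, h]
  exact Finset.sum_congr rfl fun i _ => Finset.sum_congr rfl fun j _ => by ring

end TensorProduct

theorem commutative_canonical_R_matrix_is_trivial
    (k A : Type*) [CommRing k] [CommRing A] [Algebra k A]
    (ι : Type*) (s : Finset ι) (x y z : ι → A)
    (hunit : IsUnit (∑ i ∈ s, x i ⊗ₜ[k] y i ⊗ₜ[k] z i))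
    (hcen1 : ∀ a : A,
      ∑ i ∈ s, (a * x i) ⊗ₜ[k] y i ⊗ₜ[k] z i
        = ∑ i ∈ s, x i ⊗ₜ[k] (y i * a) ⊗ₜ[k] z i)
    (hcen2 : ∀ a : A,
      ∑ i ∈ s, x i ⊗ₜ[k] (a * y i) ⊗ₜ[k] z i
        = ∑ i ∈ s, x i ⊗ₜ[k] y i ⊗ₜ[k] (z i * a))
    (hhex1 : ∑ i ∈ s, x i ⊗ₜ[k] y i ⊗ₜ[k] (1 : A) ⊗ₜ[k] z i
      = ∑ i ∈ s, ∑ j ∈ s,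
          (x j * x i) ⊗ₜ[k] y j ⊗ₜ[k] (z j * y i) ⊗ₜ[k] z i) :
    (∑ i ∈ s, x i ⊗ₜ[k] y i ⊗ₜ[k] z i
        = (1 : A) ⊗ₜ[k] (1 : A) ⊗ₜ[k] (1 : A)) ∧
    (∀ a : A, a ⊗ₜ[k] (1 : A) = (1 : A) ⊗ₜ[k] a) := by
  have h12 (a : A) : a ⊗ₜ[k] (1 : A) ⊗ₜ[k] (1 : A) = (1 : A) ⊗ₜ[k] a ⊗ₜ[k] (1 : A) :=
    hunit.mul_right_cancel <| by
      simpa only [tmul_tmul_mul_sum, one_mul, mul_comm _ a] using hcen1 a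
  have h23 (a : A) : (1 : A) ⊗ₜ[k] a ⊗ₜ[k] (1 : A) = (1 : A) ⊗ₜ[k] (1 : A) ⊗ₜ[k] a :=
    hunit.mul_right_cancel <| by
      simpa only [tmul_tmul_mul_sum, one_mul, mul_comm _ a] using hcen2 a
  have hR : ∑ i ∈ s, x i ⊗ₜ[k] y i ⊗ₜ[k] z i
      = Algebra.TensorProduct.includeLeft (S := k) (Algebra.TensorProduct.includeLeft (S := k)
          (∑ i ∈ s, x i * y i * z i)) := by
    simp only [Algebra.TensorProduct.includeLeft_apply, sum_tmul]
    exact Finset.sum_congr rfl fun i _ => tmul_tmul_eq_mul_tmul_one_tmul_one h12 h23 _ _ _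
  refine ⟨(IsIdempotentElem.iff_eq_one_of_isUnit hunit).mp ?_,
    tmul_one_eq_one_tmul_of_one_tmul_tmul_one h23⟩
  rw [hR]
  exact ((isIdempotentElem_sum_mul_mul s x y z hhex1).map _).map _
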